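/- arXiv:2003.05243 — 2 statements merged into one kernel-verified Lean document; each statement's English description precedes it below -/
import Mathlib

section
/- Let G be a finite group of odd order, let R be a commutative ring, and let 0 → L → M → N → 0 be a short exact sequence of R[G]-modules whose underlying R-modules are finite free. Assume that M is a permutation module, i.e. M has an R-basis that is permuted by the action of G. If the determinant of the action of g on N equals 1 for every g ∈ G, then the determinant of the action of g on L equals 1 for every g ∈ G. -/
open LinearMap Matrix

/-- Multiplicativity of determinants along a short exact sequence of finite free modules. -/
private theorem det_mul_of_exact_aux {R : Type*} [CommRing R] {L M N : Type*}
    [AddCommGroup L] [Module R L] [Module.Free R L] [Module.Finite R L]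
    [AddCommGroup M] [Module R M]
    [AddCommGroup N] [Module R N] [Module.Free R N] [Module.Finite R N]
    (f : L →ₗ[R] M) (π : M →ₗ[R] N)
    (hf : Function.Injective f) (hπ : Function.Surjective π)
    (hexact : LinearMap.range f = LinearMap.ker π)
    (TL : L →ₗ[R] L) (TM : M →ₗ[R] M) (TN : N →ₗ[R] N)
    (hfT : f ∘ₗ TL = TM ∘ₗ f) (hπT : π ∘ₗ TM = TN ∘ₗ π) :
    LinearMap.det TM = LinearMap.det TL * LinearMap.det TN := by
  classical
  obtain ⟨s, hs⟩ := π.exists_rightInverse_of_surjective (range_eq_top.2 hπ)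
  have hπs : ∀ n, π (s n) = n := fun n => LinearMap.ext_iff.1 hs n
  have hπf : ∀ l, π (f l) = 0 := fun l => by
    have : f l ∈ LinearMap.ker π := hexact ▸ LinearMap.mem_range_self f l
    exact this
  set e0 : L × N →ₗ[R] M := f.coprod s with he0
  have he0app : ∀ p : L × N, e0 p = f p.1 + s p.2 := fun p => rfl
  have hπe0 : ∀ p : L × N, π (e0 p) = p.2 := fun p => by
    rw [he0app, map_add, hπs, hπf, zero_add]
  have hinj : Function.Injective e0 := by
    rintro ⟨l₁, n₁⟩ ⟨l₂, n₂⟩ h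
    have hn : n₁ = n₂ := by
      have := congrArg π h
      rwa [hπe0, hπe0] at this
    subst hn
    have hfl : f l₁ = f l₂ := by
      have h' : f l₁ + s n₁ = f l₂ + s n₁ := h
      exact add_right_cancel h'
    exact Prod.ext (hf hfl) rfl
  have hsurj : Function.Surjective e0 := by
    intro m
    have hmem : m - s (π m) ∈ LinearMap.range f := by
      rw [hexact]
      simp [LinearMap.mem_ker, map_sub, hπs]
    obtain ⟨l, hl⟩ := hmem
    exact ⟨(l, π m), by rw [he0app]; simp [hl]⟩
  let e : (L × N) ≃ₗ[R] M := LinearEquiv.ofBijective e0 ⟨hinj, hsurj⟩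
  have heapp : ∀ p : L × N, e p = f p.1 + s p.2 := fun p => rfl
  have hπe : ∀ p : L × N, π (e p) = p.2 := fun p => hπe0 p
  have hesymm_snd : ∀ m : M, (e.symm m).2 = π m := fun m => by
    conv_rhs => rw [← e.apply_symm_apply m]
    rw [hπe]
  have hesymm_f : ∀ l, e.symm (f l) = (l, 0) := fun l => by
    apply e.injective
    rw [e.apply_symm_apply, heapp]
    simp
  set T : (L × N) →ₗ[R] (L × N) := (e.symm : M →ₗ[R] L × N) ∘ₗ TM ∘ₗ (e : (L × N) →ₗ[R] M)
    with hT
  have hTM : TM = (e : (L × N) →ₗ[R] M) ∘ₗ T ∘ₗ (e.symm : M →ₗ[R] L × N) := by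
    ext m
    simp [hT]
  rw [hTM, LinearMap.det_conj]
  -- now compute det T via matrices
  let bL := Module.Free.chooseBasis R L
  let bN := Module.Free.chooseBasis R N
  let bP := bL.prod bN
  have hTl : ∀ j, T (bP (Sum.inl j)) = (TL (bL j), 0) := by
    intro j
    have h1 : (bP (Sum.inl j)) = ((bL j : L), (0 : N)) :=
      Prod.ext (bL.prod_apply_inl_fst bN j) (bL.prod_apply_inl_snd bN j)
    have h2 : e ((bL j : L), (0 : N)) = f (bL j) := by rw [heapp]; simp
    have h3 : TM (f (bL j)) = f (TL (bL j)) := (LinearMap.ext_iff.1 hfT (bL j)).symm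
    simp only [hT, LinearMap.comp_apply, LinearEquiv.coe_coe, h1, h2, h3, hesymm_f]
  have hTr : ∀ j, (T (bP (Sum.inr j))).2 = TN (bN j) := by
    intro j
    have h1 : (bP (Sum.inr j)) = ((0 : L), (bN j : N)) :=
      Prod.ext (bL.prod_apply_inr_fst bN j) (bL.prod_apply_inr_snd bN j)
    have h2 : e ((0 : L), (bN j : N)) = s (bN j) := by rw [heapp]; simp
    have h3 : π (TM (s (bN j))) = TN (π (s (bN j))) := LinearMap.ext_iff.1 hπT (s (bN j))
    simp only [hT, LinearMap.comp_apply, LinearEquiv.coe_coe, h1, h2, hesymm_snd, h3, hπs]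
  have hmat : LinearMap.toMatrix bP bP T =
      Matrix.fromBlocks (LinearMap.toMatrix bL bL TL)
        ((LinearMap.toMatrix bP bP T).toBlocks₁₂) 0 (LinearMap.toMatrix bN bN TN) := by
    ext i j
    rcases i with i | i <;> rcases j with j | j
    · rw [Matrix.fromBlocks_apply₁₁, LinearMap.toMatrix_apply, LinearMap.toMatrix_apply,
        hTl j, Module.Basis.prod_repr_inl]
    · rw [Matrix.fromBlocks_apply₁₂]
      rfl
    · rw [Matrix.fromBlocks_apply₂₁, LinearMap.toMatrix_apply, hTl j, Module.Basis.prod_repr_inr]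
      simp
    · rw [Matrix.fromBlocks_apply₂₂, LinearMap.toMatrix_apply, LinearMap.toMatrix_apply,
        Module.Basis.prod_repr_inr, hTr j]
  rw [← LinearMap.det_toMatrix bP T, hmat, Matrix.det_fromBlocks_zero₂₁,
    LinearMap.det_toMatrix, LinearMap.det_toMatrix]

/-- Determinant of a permutation module action by a group of odd order is `1`. -/
private theorem det_perm_eq_one_aux {G : Type*} [Group G] [Fintype G]
    (hG : Odd (Fintype.card G)) {R : Type*} [CommRing R]
    {M : Type*} [AddCommGroup M] [Module R M]
    (ρM : Representation R G M) {ι : Type*} [Finite ι] (b : Module.Basis ι R M)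
    (hperm : ∀ (g : G) (x : ι), ∃ y : ι, ρM g (b x) = b y) :
    ∀ g : G, LinearMap.det (ρM g) = 1 := by
  classical
  rcases subsingleton_or_nontrivial R with hR | hR
  · exact fun g => Subsingleton.elim _ _
  have : Fintype ι := Fintype.ofFinite ι
  choose σf hσf using hperm
  have hmul : ∀ g h : G, ∀ x, σf (g * h) x = σf g (σf h x) := by
    intro g h x
    apply b.injective
    rw [← hσf, ← hσf, ← hσf, _root_.map_mul]
    rfl

  have hone : ∀ x, σf 1 x = x := by
    intro x
    apply b.injective
    rw [← hσf, _root_.map_one]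
    rfl

  have hbij : ∀ g : G, Function.Bijective (σf g) := by
    intro g
    refine Function.bijective_iff_has_inverse.2 ⟨σf g⁻¹, fun x => ?_, fun x => ?_⟩
    · rw [← hmul, inv_mul_cancel, hone]
    · rw [← hmul, mul_inv_cancel, hone]
  let σ : G → Equiv.Perm ι := fun g => Equiv.ofBijective _ (hbij g)
  have hσapp : ∀ g x, σ g x = σf g x := fun g x => rfl
  have hσmul : ∀ g h : G, σ (g * h) = σ g * σ h := by
    intro g h
    ext x
    simp [hσapp, hmul, Equiv.Perm.mul_apply]
  let φ : G →* Equiv.Perm ι := MonoidHom.mk' σ hσmul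
  intro g
  -- sign is 1
  have hsign : Equiv.Perm.sign (σ g) = 1 := by
    have hpow : (Equiv.Perm.sign (σ g)) ^ Fintype.card G = 1 := by
      have : Equiv.Perm.sign (σ g) ^ Fintype.card G
          = (Equiv.Perm.sign.comp φ) (g ^ Fintype.card G) := by
        rw [map_pow]
        rfl
      rw [this, pow_card_eq_one, _root_.map_one]
    rcases Int.units_eq_one_or (Equiv.Perm.sign (σ g)) with h | h
    · exact h
    · exfalso
      rw [h, hG.neg_one_pow] at hpow
      exact (by decide : ¬((-1 : ℤˣ) = 1)) hpow
  have hmat : LinearMap.toMatrix b b (ρM g) = ((σ g)⁻¹).permMatrix R := by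
    ext i j
    rw [LinearMap.toMatrix_apply, hσf, b.repr_self, Equiv.Perm.permMatrix,
      PEquiv.toMatrix_apply, Equiv.toPEquiv_apply, Finsupp.single_apply]
    have hiff : (σf g j = i) ↔ ((σ g)⁻¹ i = j) := by
      constructor
      · intro h
        rw [← h]
        exact (σ g).symm_apply_apply j
      · intro h
        rw [← h]
        exact (σ g).apply_symm_apply i
    simp only [Option.mem_def, Option.some.injEq]
    exact if_congr hiff rfl rfl
  have hdet : LinearMap.det (ρM g) = Matrix.det (((σ g)⁻¹).permMatrix R) := by
    rw [← LinearMap.det_toMatrix b, hmat]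
  rw [hdet, Matrix.det_permutation, Equiv.Perm.sign_inv, hsign]
  simp

/-- Let `G` be a finite group of odd order, `R` a commutative ring, and
`0 → L → M → N → 0` a short exact sequence of `R[G]`-modules whose underlying `R`-modules
are finite free (here given by representations `ρL, ρM, ρN` together with equivariant
`R`-linear maps `f : L → M` injective and `π : M → N` surjective with
`range f = ker π`). Assume `M` is a permutation module, i.e. `M` has an `R`-basis
(indexed by a finite type) permuted by the `G`-action. If the determinant of the action
of `g` on `N` equals `1` for every `g ∈ G`, then the determinant of the action of `g`
on `L` equals `1` for every `g ∈ G`. -/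
theorem trivial_source_stmt_5 {G : Type*} [Group G] [Fintype G]
    (hG : Odd (Fintype.card G)) {R : Type*} [CommRing R]
    {L M N : Type*}
    [AddCommGroup L] [Module R L] [Module.Free R L] [Module.Finite R L]
    [AddCommGroup M] [Module R M] [Module.Free R M] [Module.Finite R M]
    [AddCommGroup N] [Module R N] [Module.Free R N] [Module.Finite R N]
    (ρL : Representation R G L) (ρM : Representation R G M) (ρN : Representation R G N)
    (f : L →ₗ[R] M) (π : M →ₗ[R] N)
    (hf : Function.Injective f) (hπ : Function.Surjective π)
    (hexact : LinearMap.range f = LinearMap.ker π)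
    (hfG : ∀ g : G, f ∘ₗ ρL g = ρM g ∘ₗ f)
    (hπG : ∀ g : G, π ∘ₗ ρM g = ρN g ∘ₗ π)
    {ι : Type*} [Finite ι] (b : Module.Basis ι R M)
    (hperm : ∀ (g : G) (x : ι), ∃ y : ι, ρM g (b x) = b y)
    (hN : ∀ g : G, LinearMap.det (ρN g) = 1) :
    ∀ g : G, LinearMap.det (ρL g) = 1 := by
  intro g
  have h1 : LinearMap.det (ρM g) = 1 := det_perm_eq_one_aux hG ρM b hperm g
  have h2 := det_mul_of_exact_aux f π hf hπ hexact (ρL g) (ρM g) (ρN g) (hfG g) (hπG g)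
  rw [h1, hN g, mul_one] at h2
  exact h2.symm
end

section
/- Let p be a prime, n ≥ 1, and let D be a cyclic group of order p^n with generator u; for 0 ≤ j ≤ n let D_j denote the unique subgroup of D of order p^j. Let ζ ∈ ℂ be a primitive p^n-th root of unity and for 0 ≤ κ ≤ p^n−1 let λ_κ : D → ℂ^× be the linear character determined by λ_κ(u) = ζ^κ. Fix 1 ≤ i ≤ n, let t ≥ 0 and let 0 ≤ i(0) < i(1) < ⋯ < i(t) ≤ i−1 be integers. Suppose V_0, V_1, …, V_{t+1} are finite-dimensional complex representations of the subgroup D_i such that V_{t+1} is the one-dimensional trivial representation and, for each 0 ≤ j ≤ t, there is a short exact sequence of representations of D_i: 0 → V_j → ℂ[D_i/D_{i(j)}] → V_{j+1} → 0, where ℂ[D_i/D_{i(j)}] is the permutation representation of D_i on the cosets D_i/D_{i(j)}. Then the character of the induced representation Ind_{D_i}^{D}(V_0) equals Σ_{j=0}^{t} (−1)^j ( Σ_{0 ≤ κ ≤ p^n−1, p^{i(j)} ∣ κ} λ_κ ) + (−1)^{t+1} ( Σ_{0 ≤ κ ≤ p^n−1, p^{i} ∣ κ} λ_κ ). -/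
open scoped Classical


open LinearMap in
lemma aux_trace_ses {K M₁ M₂ M₃ : Type*} [Field K]
    [AddCommGroup M₁] [Module K M₁] [FiniteDimensional K M₁]
    [AddCommGroup M₂] [Module K M₂] [FiniteDimensional K M₂]
    [AddCommGroup M₃] [Module K M₃] [FiniteDimensional K M₃]
    (f : M₁ →ₗ[K] M₂) (π : M₂ →ₗ[K] M₃) (hf : Function.Injective f)
    (hπ : Function.Surjective π) (hker : range f = ker π)
    (a : M₁ →ₗ[K] M₁) (b : M₂ →ₗ[K] M₂) (c : M₃ →ₗ[K] M₃)
    (hab : f ∘ₗ a = b ∘ₗ f) (hbc : π ∘ₗ b = c ∘ₗ π) :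
    trace K M₂ b = trace K M₁ a + trace K M₃ c := by
  classical
  set W : Submodule K M₂ := range f with hW
  obtain ⟨W', hc⟩ := Submodule.exists_isCompl W
  set Pc : M₂ →ₗ[K] W := Submodule.projectionOnto W W' hc
  set Qc : M₂ →ₗ[K] W' := Submodule.projectionOnto W' W hc.symm
  have hbW : ∀ x ∈ W, b x ∈ W := by
    rintro x ⟨y, rfl⟩
    exact ⟨a y, by simpa using congrArg (fun φ => φ y) hab⟩
  set bW : W →ₗ[K] W := b.restrict hbW
  have hφinj : Function.Injective (π ∘ₗ W'.subtype) := by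
    intro x y hxy
    have hmem : (x : M₂) - y ∈ ker π := by
      simp only [mem_ker, map_sub]
      simpa [sub_eq_zero] using hxy
    have hmem' : (x : M₂) - y ∈ W ⊓ W' := ⟨hker ▸ hmem, sub_mem x.2 y.2⟩
    rw [hc.inf_eq_bot] at hmem'
    exact Subtype.ext (sub_eq_zero.mp hmem')
  have hφsurj : Function.Surjective (π ∘ₗ W'.subtype) := by
    intro y
    obtain ⟨m, rfl⟩ := hπ y
    refine ⟨Qc m, ?_⟩
    have hdecomp : (Qc m : M₂) + (Pc m : M₂) = m := Submodule.projection_add_projection_eq_self hc.symm m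
    have hPm : π (Pc m : M₂) = 0 := by
      have : (Pc m : M₂) ∈ ker π := hker ▸ (Pc m).2
      simpa using this
    calc π ((Qc m : M₂)) = π ((Qc m : M₂) + (Pc m : M₂)) := by rw [map_add, hPm, add_zero]
    _ = π m := by rw [hdecomp]
  set e₂ : W' ≃ₗ[K] M₃ := LinearEquiv.ofBijective (π ∘ₗ W'.subtype) ⟨hφinj, hφsurj⟩ with he₂
  set σ : M₃ →ₗ[K] M₂ := W'.subtype ∘ₗ (e₂.symm : M₃ →ₗ[K] W') with hσ
  have hπσ : π ∘ₗ σ = LinearMap.id := by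
    ext y
    exact e₂.apply_symm_apply y
  have hQσπ : W'.subtype ∘ₗ Qc = σ ∘ₗ π := by
    ext m
    have hdecomp : (Qc m : M₂) + (Pc m : M₂) = m := Submodule.projection_add_projection_eq_self hc.symm m
    have hPm : π (Pc m : M₂) = 0 := by
      have : (Pc m : M₂) ∈ ker π := hker ▸ (Pc m).2
      simpa using this
    have hπm : π m = e₂ (Qc m) := by
      conv_lhs => rw [← hdecomp]
      rw [map_add, hPm, add_zero]
      rfl
    simp only [LinearMap.comp_apply, hσ, hπm]
    simp
  have hsplit : b = W.subtype ∘ₗ bW ∘ₗ Pc + (b ∘ₗ σ) ∘ₗ π := by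
    ext m
    have hdecomp : (Qc m : M₂) + (Pc m : M₂) = m := Submodule.projection_add_projection_eq_self hc.symm m
    have h1 : (W.subtype ∘ₗ bW ∘ₗ Pc) m = b (Pc m : M₂) := rfl
    have h2 : ((b ∘ₗ σ) ∘ₗ π) m = b ((W'.subtype ∘ₗ Qc) m) := by
      rw [hQσπ]; rfl
    simp only [LinearMap.add_apply, h1, h2]
    rw [← map_add]
    congr 1
    show m = ↑(Pc m) + ↑(Qc m)
    rw [add_comm]
    exact hdecomp.symm
  rw [hsplit, map_add]
  congr 1
  · rw [← LinearMap.comp_assoc, LinearMap.trace_comp_comm']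
    have hPcs : Pc ∘ₗ (W.subtype ∘ₗ bW) = bW := by
      ext x
      simp [Pc, Submodule.projectionOnto_apply_left hc]
    rw [hPcs]
    set e₁ : M₁ ≃ₗ[K] W := LinearEquiv.ofInjective f hf with he₁
    have hconj : bW = e₁.conj a := by
      ext x
      show b ↑x = _
      have hx : (x : M₂) = f (e₁.symm x) := by
        conv_lhs => rw [← e₁.apply_symm_apply x]
        rfl
      rw [hx, ← LinearMap.comp_apply, ← hab]
      rfl
    rw [hconj, LinearMap.trace_conj']
  · rw [LinearMap.trace_comp_comm']
    rw [← LinearMap.comp_assoc, hbc, LinearMap.comp_assoc, hπσ, LinearMap.comp_id]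

lemma aux_perm_trace {G α : Type*} [Group G] [Fintype α] [MulAction G α] (g : G) :
    LinearMap.trace ℂ (α →₀ ℂ) (Finsupp.lmapDomain ℂ ℂ ((g • ·) : α → α)) =
      ((Finset.univ.filter fun a : α => g • a = a).card : ℂ) := by
  classical
  rw [LinearMap.trace_eq_matrix_trace ℂ (Finsupp.basisSingleOne (R := ℂ) (ι := α))]
  rw [Matrix.trace]
  have hdiag : ∀ a : α, (LinearMap.toMatrix Finsupp.basisSingleOne Finsupp.basisSingleOne
      (Finsupp.lmapDomain ℂ ℂ ((g • ·) : α → α))).diag a = if g • a = a then (1 : ℂ) else 0 := by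
    intro a
    rw [Matrix.diag, LinearMap.toMatrix_apply]
    simp [Finsupp.lmapDomain_apply, Finsupp.mapDomain_single, Finsupp.single_apply]
  rw [Finset.sum_congr rfl fun a _ => hdiag a]
  rw [Finset.sum_boole]
lemma aux_telescope (t : ℕ) (c P : ℕ → ℂ) (h : ∀ j ≤ t, c j = P j - c (j + 1)) :
    c 0 = (∑ j ∈ Finset.range (t + 1), (-1 : ℂ) ^ j * P j) + (-1 : ℂ) ^ (t + 1) * c (t + 1) := by
  have key : ∀ s, s ≤ t + 1 → c 0 = (∑ j ∈ Finset.range s, (-1 : ℂ) ^ j * P j) + (-1 : ℂ) ^ s * c s := by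
    intro s
    induction s with
    | zero => intro _; simp
    | succ m ih =>
      intro hm
      have hm' : m ≤ t := Nat.lt_succ_iff.mp hm
      rw [ih (Nat.le_of_succ_le hm), Finset.sum_range_succ]
      rw [h m hm']
      ring
  exact key (t + 1) le_rfl

lemma aux_fixed_count {Γ : Type*} [CommGroup Γ] (N : Subgroup Γ) [Fintype (Γ ⧸ N)] (g' : Γ) :
    ((Finset.univ.filter fun q : Γ ⧸ N => g' • q = q).card : ℂ) =
      if g' ∈ N then (Nat.card (Γ ⧸ N) : ℂ) else 0 := by
  classical
  have hfix : ∀ q : Γ ⧸ N, g' • q = q ↔ g' ∈ N := by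
    intro q
    induction q using QuotientGroup.induction_on with
    | H x =>
      rw [MulAction.Quotient.smul_mk, QuotientGroup.eq]
      constructor
      · intro h
        have : (g' • x)⁻¹ * x = g'⁻¹ := by
          simp [smul_eq_mul, mul_inv_rev, mul_comm, mul_assoc]
        rw [this] at h
        exact (inv_mem_iff).mp h
      · intro h
        have : (g' • x)⁻¹ * x = g'⁻¹ := by
          simp [smul_eq_mul, mul_inv_rev, mul_comm, mul_assoc]
        rw [this]
        exact inv_mem h
  by_cases h : g' ∈ N
  · rw [if_pos h]
    have : (Finset.univ.filter fun q : Γ ⧸ N => g' • q = q) = Finset.univ := by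
      apply Finset.filter_true_of_mem
      intro q _
      exact (hfix q).mpr h
    rw [this, Finset.card_univ, Nat.card_eq_fintype_card]
  · rw [if_neg h]
    have : (Finset.univ.filter fun q : Γ ⧸ N => g' • q = q) = ∅ := by
      apply Finset.filter_false_of_mem
      intro q _
      exact fun hc => h ((hfix q).mp hc)
    rw [this, Finset.card_empty, Nat.cast_zero]

lemma aux_perm_trace_count {Γ : Type*} [CommGroup Γ] (N : Subgroup Γ) [Fintype (Γ ⧸ N)] (g' : Γ) :
    LinearMap.trace ℂ ((Γ ⧸ N) →₀ ℂ) (Finsupp.lmapDomain ℂ ℂ ((g' • ·) : (Γ ⧸ N) → (Γ ⧸ N))) =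
      if g' ∈ N then (Nat.card (Γ ⧸ N) : ℂ) else 0 := by
  rw [aux_perm_trace]
  convert aux_fixed_count N g' using 3
  · exact Finset.filter_congr_decidable _ _ _

lemma aux_mem_iff (p n : ℕ) (hp : p.Prime) [NeZero (p ^ n)]
    (Dsub : ℕ → Subgroup (Multiplicative (ZMod (p ^ n))))
    (hDsub : ∀ m ≤ n, Nat.card (Dsub m) = p ^ m)
    (m : ℕ) (hm : m ≤ n) (x : Multiplicative (ZMod (p ^ n))) :
    x ∈ Dsub m ↔ x ^ (p ^ m) = 1 := by
  classical
  set D := Multiplicative (ZMod (p ^ n))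
  set φ : D →* D := powMonoidHom (p ^ m) with hφ
  have hcardD : Nat.card D = p ^ n := by
    simp [D, Nat.card_eq_fintype_card, Fintype.card_multiplicative, ZMod.card]
  have hsub : Dsub m ≤ φ.ker := by
    intro y hy
    have : (⟨y, hy⟩ : Dsub m) ^ (p ^ m) = 1 := by
      rw [← hDsub m hm]; exact pow_card_eq_one'
    have hy1 : y ^ (p ^ m) = 1 := by
      simpa [Subtype.ext_iff] using this
    simpa [MonoidHom.mem_ker, hφ, powMonoidHom_apply] using hy1
  have hu : orderOf (Multiplicative.ofAdd (1 : ZMod (p ^ n))) = p ^ n := by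
    rw [orderOf_ofAdd_eq_addOrderOf, ZMod.addOrderOf_one]
  have hordpow : orderOf ((Multiplicative.ofAdd (1 : ZMod (p ^ n))) ^ (p ^ m)) = p ^ (n - m) := by
    rw [orderOf_pow, hu, Nat.gcd_eq_right (pow_dvd_pow p hm), Nat.pow_div hm hp.pos]
  have hrange : p ^ (n - m) ∣ Nat.card φ.range := by
    rw [← hordpow]
    exact Subgroup.orderOf_dvd_natCard _ ⟨Multiplicative.ofAdd 1, rfl⟩
  have hkerle : Nat.card φ.ker ≤ p ^ m := by
    have h1 : Nat.card D = Nat.card (D ⧸ φ.ker) * Nat.card φ.ker :=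
      Subgroup.card_eq_card_quotient_mul_card_subgroup φ.ker
    have h2 : Nat.card (D ⧸ φ.ker) = Nat.card φ.range :=
      Nat.card_congr (QuotientGroup.quotientKerEquivRange φ).toEquiv
    have hpos : 0 < p ^ (n - m) := pow_pos hp.pos _
    obtain ⟨d, hd⟩ := hrange
    have hrangepos : 0 < Nat.card φ.range := Nat.card_pos
    have hd0 : 0 < d := by
      rcases Nat.eq_zero_or_pos d with h | h
      · rw [h, mul_zero] at hd
        exact absurd hd hrangepos.ne'
      · exact h
    have hkey : p ^ (n - m) * (d * Nat.card φ.ker) = Nat.card D := by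
      rw [h1, h2, hd]; ring
    have hkey2 : p ^ (n - m) * (d * Nat.card φ.ker) = p ^ (n - m) * p ^ m := by
      rw [hkey, hcardD, ← pow_add, Nat.sub_add_cancel hm]
    have hdk : d * Nat.card φ.ker = p ^ m := Nat.eq_of_mul_eq_mul_left hpos hkey2
    calc Nat.card φ.ker ≤ d * Nat.card φ.ker := Nat.le_mul_of_pos_left _ hd0
    _ = p ^ m := hdk
  have heq : Dsub m = φ.ker :=
    Subgroup.eq_of_le_of_card_ge hsub (by rw [hDsub m hm]; exact hkerle)
  rw [heq]
  simp [MonoidHom.mem_ker, hφ, powMonoidHom_apply]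

lemma aux_char_sum (p n : ℕ) (hp : p.Prime) [NeZero (p ^ n)]
    (Dsub : ℕ → Subgroup (Multiplicative (ZMod (p ^ n))))
    (hDsub : ∀ m ≤ n, Nat.card (Dsub m) = p ^ m)
    (ζ : ℂ) (hζ : IsPrimitiveRoot ζ (p ^ n))
    (lam : ℕ → (Multiplicative (ZMod (p ^ n)) →* ℂ))
    (hlam : ∀ κ, lam κ (Multiplicative.ofAdd (1 : ZMod (p ^ n))) = ζ ^ κ)
    (s : ℕ) (hs : s ≤ n) (g : Multiplicative (ZMod (p ^ n))) :
    (∑ κ ∈ (Finset.range (p ^ n)).filter (fun κ => p ^ s ∣ κ), lam κ g) =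
      if g ∈ Dsub s then ((p : ℂ) ^ (n - s)) else 0 := by
  classical
  have hmem_iff := aux_mem_iff p n hp Dsub hDsub
  set v : ℕ := (Multiplicative.toAdd g).val with hv
  have hg : g = (Multiplicative.ofAdd (1 : ZMod (p ^ n))) ^ v := by
    apply Multiplicative.toAdd.injective
    rw [toAdd_pow, toAdd_ofAdd, nsmul_eq_mul, mul_one]
    exact (ZMod.natCast_rightInverse (Multiplicative.toAdd g)).symm
  have hlamg : ∀ κ, lam κ g = ζ ^ (κ * v) := by
    intro κ
    rw [hg, map_pow, hlam, ← pow_mul]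
  have hpow : p ^ s * p ^ (n - s) = p ^ n := by
    rw [← pow_add, Nat.add_sub_cancel' hs]
  have hfilter : (Finset.range (p ^ n)).filter (fun κ => p ^ s ∣ κ) =
      (Finset.range (p ^ (n - s))).image (fun m => p ^ s * m) := by
    ext κ
    simp only [Finset.mem_filter, Finset.mem_range, Finset.mem_image]
    constructor
    · rintro ⟨hκ, m, rfl⟩
      refine ⟨m, ?_, rfl⟩
      by_contra hcon
      push_neg at hcon
      have : p ^ n ≤ p ^ s * m := by
        calc p ^ n = p ^ s * p ^ (n - s) := hpow.symm
        _ ≤ p ^ s * m := Nat.mul_le_mul_left _ hcon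
      omega
    · rintro ⟨m, hm, rfl⟩
      refine ⟨?_, ⟨m, rfl⟩⟩
      calc p ^ s * m < p ^ s * p ^ (n - s) :=
        (Nat.mul_lt_mul_left (pow_pos hp.pos _)).mpr hm
      _ = p ^ n := hpow
  have hinj : Set.InjOn (fun m => p ^ s * m) (Finset.range (p ^ (n - s))) := by
    intro a _ b _ hab
    exact Nat.eq_of_mul_eq_mul_left (pow_pos hp.pos _) hab
  rw [hfilter, Finset.sum_image hinj]
  set w : ℂ := ζ ^ (p ^ s * v) with hw
  have hterm : ∀ m, lam (p ^ s * m) g = w ^ m := by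
    intro m
    rw [hlamg, hw, ← pow_mul]
    ring_nf
  rw [Finset.sum_congr rfl fun m _ => hterm m]
  have hu : orderOf (Multiplicative.ofAdd (1 : ZMod (p ^ n))) = p ^ n := by
    rw [orderOf_ofAdd_eq_addOrderOf, ZMod.addOrderOf_one]
  have hw1_iff : w = 1 ↔ g ∈ Dsub s := by
    rw [hw, hζ.pow_eq_one_iff_dvd, hmem_iff s hs g, hg, ← pow_mul, ← orderOf_dvd_iff_pow_eq_one,
      hu, mul_comm v (p ^ s)]
  by_cases hmem : g ∈ Dsub s
  · rw [if_pos hmem]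
    have : w = 1 := hw1_iff.mpr hmem
    simp [this]
  · rw [if_neg hmem]
    have hwne : w ≠ 1 := fun h => hmem (hw1_iff.mp h)
    rw [geom_sum_eq hwne]
    have hwN : w ^ (p ^ (n - s)) = 1 := by
      rw [hw, ← pow_mul]
      have : p ^ s * v * p ^ (n - s) = p ^ n * v := by
        rw [mul_comm (p ^ s) v, mul_assoc, hpow]; ring
      rw [this, pow_mul, hζ.pow_eq_one, one_pow]
    rw [hwN, sub_self, zero_div]
/-- Let `p` be a prime, `n ≥ 1`, and let `D` be the cyclic group of
order `p ^ n` (realised as `Multiplicative (ZMod (p ^ n))`) with generator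
`u = Multiplicative.ofAdd 1`; for `0 ≤ m ≤ n` let `Dsub m` be the unique subgroup of
order `p ^ m`. Let `ζ ∈ ℂ` be a primitive `p ^ n`-th root of unity and `λ_κ` the linear
character with `λ_κ(u) = ζ ^ κ`. Fix `1 ≤ i ≤ n`, let `t ≥ 0` and
`0 ≤ i(0) < ⋯ < i(t) ≤ i - 1`. Suppose `V 0, …, V (t+1)` are finite-dimensional complex
representations of the subgroup `D_i = Dsub i` such that `V (t+1)` is the one-dimensional
trivial representation and for each `0 ≤ j ≤ t` there is a short exact sequence
`0 → V j → ℂ[D_i ⧸ D_{i(j)}] → V (j+1) → 0` of representations of `D_i`.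
Then the character of the induced representation `Ind_{D_i}^{D} (V 0)` — given for
`g ∈ D` by the standard induced-character (Frobenius) formula
`|D_i|⁻¹ ∑_{x ∈ D, x⁻¹gx ∈ D_i} χ_{V 0}(x⁻¹ g x)` — equals
`∑_{j=0}^{t} (-1)^j (∑_{0 ≤ κ ≤ pⁿ-1, p^{i(j)} ∣ κ} λ_κ)
+ (-1)^{t+1} (∑_{0 ≤ κ ≤ pⁿ-1, pⁱ ∣ κ} λ_κ)`. -/
theorem trivial_source_stmt_9 (p n i t : ℕ) (hp : p.Prime) (hn : 1 ≤ n)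
    [NeZero (p ^ n)] (hi1 : 1 ≤ i) (hin : i ≤ n)
    (Dsub : ℕ → Subgroup (Multiplicative (ZMod (p ^ n))))
    (hDsub : ∀ m ≤ n, Nat.card (Dsub m) = p ^ m)
    (hDle : ∀ a b, a ≤ b → b ≤ n → Dsub a ≤ Dsub b)
    (ζ : ℂ) (hζ : IsPrimitiveRoot ζ (p ^ n))
    (lam : ℕ → (Multiplicative (ZMod (p ^ n)) →* ℂ))
    (hlam : ∀ κ, lam κ (Multiplicative.ofAdd (1 : ZMod (p ^ n))) = ζ ^ κ)
    (idx : Fin (t + 1) → ℕ) (hmono : StrictMono idx) (hlast : idx (Fin.last t) ≤ i - 1)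
    (V : Fin (t + 2) → Type*) [∀ j, AddCommGroup (V j)] [∀ j, Module ℂ (V j)]
    [∀ j, FiniteDimensional ℂ (V j)]
    (ρ : ∀ j, Representation ℂ (Dsub i) (V j))
    (htriv : Module.finrank ℂ (V (Fin.last (t + 1))) = 1 ∧
      ∀ g, ρ (Fin.last (t + 1)) g = LinearMap.id)
    (hses : ∀ j : Fin (t + 1),
      ∃ (f : V j.castSucc →ₗ[ℂ]
            ((Dsub i ⧸ (Dsub (idx j)).subgroupOf (Dsub i)) →₀ ℂ))
        (π : ((Dsub i ⧸ (Dsub (idx j)).subgroupOf (Dsub i)) →₀ ℂ) →ₗ[ℂ] V j.succ),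
        Function.Injective f ∧ Function.Surjective π ∧
        LinearMap.range f = LinearMap.ker π ∧
        (∀ g : Dsub i, f ∘ₗ ρ j.castSucc g =
          (Finsupp.lmapDomain ℂ ℂ ((g • ·) : (Dsub i ⧸ (Dsub (idx j)).subgroupOf (Dsub i)) → (Dsub i ⧸ (Dsub (idx j)).subgroupOf (Dsub i)))) ∘ₗ f) ∧
        (∀ g : Dsub i, π ∘ₗ (Finsupp.lmapDomain ℂ ℂ ((g • ·) : (Dsub i ⧸ (Dsub (idx j)).subgroupOf (Dsub i)) → (Dsub i ⧸ (Dsub (idx j)).subgroupOf (Dsub i)))) = ρ j.succ g ∘ₗ π))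
    (g : Multiplicative (ZMod (p ^ n))) :
    (Nat.card (Dsub i) : ℂ)⁻¹ *
      ∑ x : Multiplicative (ZMod (p ^ n)),
        (if h : x⁻¹ * g * x ∈ Dsub i then
          LinearMap.trace ℂ (V 0) (ρ 0 ⟨x⁻¹ * g * x, h⟩) else 0) =
      (∑ j : Fin (t + 1), (-1 : ℂ) ^ (j : ℕ) *
        ∑ κ ∈ (Finset.range (p ^ n)).filter (fun κ => p ^ (idx j) ∣ κ), lam κ g) +
      (-1 : ℂ) ^ (t + 1) *
        ∑ κ ∈ (Finset.range (p ^ n)).filter (fun κ => p ^ i ∣ κ), lam κ g := by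
  classical
  have hii : i - 1 < i := Nat.sub_lt hi1 one_pos
  have hidxlt : ∀ j : Fin (t + 1), idx j < i := fun j =>
    lt_of_le_of_lt (le_trans (hmono.monotone (Fin.le_last j)) hlast) hii
  have hidxn : ∀ j : Fin (t + 1), idx j ≤ n := fun j => le_trans (hidxlt j).le hin
  have hKle : ∀ j : Fin (t + 1), Dsub (idx j) ≤ Dsub i := fun j =>
    hDle _ _ (hidxlt j).le hin
  have hpne : (p : ℂ) ≠ 0 := Nat.cast_ne_zero.mpr hp.pos.ne'
  -- simplify the conjugation
  have hcomm : ∀ x : Multiplicative (ZMod (p ^ n)), x⁻¹ * g * x = g := fun x => by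
    rw [mul_comm x⁻¹ g, mul_assoc, inv_mul_cancel, mul_one]
  have hsummand : ∀ x : Multiplicative (ZMod (p ^ n)),
      (if h : x⁻¹ * g * x ∈ Dsub i then
          LinearMap.trace ℂ (V 0) (ρ 0 ⟨x⁻¹ * g * x, h⟩) else 0) =
        (if h : g ∈ Dsub i then LinearMap.trace ℂ (V 0) (ρ 0 ⟨g, h⟩) else 0) := by
    intro x
    by_cases h : g ∈ Dsub i
    · rw [dif_pos (show x⁻¹ * g * x ∈ Dsub i from (hcomm x).symm ▸ h), dif_pos h]
      exact congrArg (fun z : Dsub i => LinearMap.trace ℂ (V 0) (ρ 0 z))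
        (Subtype.ext (hcomm x))
    · rw [dif_neg (show ¬ x⁻¹ * g * x ∈ Dsub i from fun hc => h ((hcomm x) ▸ hc)), dif_neg h]
  rw [Finset.sum_congr rfl fun x (_ : x ∈ Finset.univ) => hsummand x]
  rw [Finset.sum_const, Finset.card_univ]
  have hcardD : Fintype.card (Multiplicative (ZMod (p ^ n))) = p ^ n := by
    simp [Fintype.card_multiplicative, ZMod.card]
  rw [hcardD, nsmul_eq_mul]
  -- rewrite character sums on the RHS
  have hchar := aux_char_sum p n hp Dsub hDsub ζ hζ lam hlam
  rw [hchar i hin g]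
  rw [Finset.sum_congr rfl fun j (_ : j ∈ Finset.univ) => by
    rw [hchar (idx j) (hidxn j) g]]
  have hDicard : (Nat.card (Dsub i) : ℂ) = (p : ℂ) ^ i := by
    rw [hDsub i hin]; push_cast; ring
  rw [hDicard]
  by_cases hgi : g ∈ Dsub i
  · rw [dif_pos hgi]
    set g' : Dsub i := ⟨g, hgi⟩ with hg'
    -- step: trace recursion from the exact sequences
    have htr : ∀ j : Fin (t + 1),
        LinearMap.trace ℂ (V j.castSucc) (ρ j.castSucc g') =
          (if g ∈ Dsub (idx j) then ((p : ℂ) ^ (i - idx j)) else 0)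
            - LinearMap.trace ℂ (V j.succ) (ρ j.succ g') := by
      intro j
      obtain ⟨f, π, hfi, hπs, hker, hc1, hc2⟩ := hses j
      haveI : Fintype (Dsub i ⧸ (Dsub (idx j)).subgroupOf (Dsub i)) := Fintype.ofFinite _
      haveI : FiniteDimensional ℂ ((Dsub i ⧸ (Dsub (idx j)).subgroupOf (Dsub i)) →₀ ℂ) :=
        Module.Finite.of_basis Finsupp.basisSingleOne
      have h := aux_trace_ses f π hfi hπs hker (ρ j.castSucc g')
        (Finsupp.lmapDomain ℂ ℂ ((g' • ·) : (Dsub i ⧸ (Dsub (idx j)).subgroupOf (Dsub i)) → (Dsub i ⧸ (Dsub (idx j)).subgroupOf (Dsub i))))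
        (ρ j.succ g') (hc1 g') (hc2 g')
      have hperm := aux_perm_trace_count ((Dsub (idx j)).subgroupOf (Dsub i)) g'
      have hcardK : Nat.card ((Dsub (idx j)).subgroupOf (Dsub i)) = p ^ idx j := by
        rw [← hDsub (idx j) (hidxn j)]
        exact Nat.card_congr (Subgroup.subgroupOfEquivOfLe (hKle j)).toEquiv
      have hcardQ : Nat.card (Dsub i ⧸ (Dsub (idx j)).subgroupOf (Dsub i)) = p ^ (i - idx j) := by
        have h1 := Subgroup.card_eq_card_quotient_mul_card_subgroup
          ((Dsub (idx j)).subgroupOf (Dsub i))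
        rw [hDsub i hin, hcardK] at h1
        have h2 : p ^ (i - idx j) * p ^ (idx j) = p ^ i := by
          rw [← pow_add, Nat.sub_add_cancel (hidxlt j).le]
        exact Nat.eq_of_mul_eq_mul_right (pow_pos hp.pos _) (by rw [h2, h1])
      have hmemK : g' ∈ (Dsub (idx j)).subgroupOf (Dsub i) ↔ g ∈ Dsub (idx j) :=
        Subgroup.mem_subgroupOf
      rw [hperm, hcardQ] at h
      rw [if_congr hmemK rfl rfl] at h
      rw [eq_sub_iff_add_eq, ← h]
      norm_cast
    -- telescoping
    set c : ℕ → ℂ := fun j =>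
      if h : j < t + 2 then LinearMap.trace ℂ (V ⟨j, h⟩) (ρ ⟨j, h⟩ g') else 0 with hc
    set P : ℕ → ℂ := fun j =>
      if h : j < t + 1 then
        (if g ∈ Dsub (idx ⟨j, h⟩) then ((p : ℂ) ^ (i - idx ⟨j, h⟩)) else 0) else 0 with hP
    have hcP : ∀ j ≤ t, c j = P j - c (j + 1) := by
      intro j hj
      have h1 : j < t + 1 := by omega
      have h2 : j < t + 2 := by omega
      have h3 : j + 1 < t + 2 := by omega
      simp only [hc, hP, dif_pos h1, dif_pos h2, dif_pos h3]
      have hcast : (⟨j, h2⟩ : Fin (t + 2)) = (⟨j, h1⟩ : Fin (t + 1)).castSucc := rfl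
      have hsucc : (⟨j + 1, h3⟩ : Fin (t + 2)) = (⟨j, h1⟩ : Fin (t + 1)).succ := rfl
      rw [hcast, hsucc]
      exact htr ⟨j, h1⟩
    have htel := aux_telescope t c P hcP
    have hc0 : c 0 = LinearMap.trace ℂ (V 0) (ρ 0 g') := by
      simp only [hc, dif_pos (show 0 < t + 2 by omega)]
      have h0 : (⟨0, show 0 < t + 2 by omega⟩ : Fin (t + 2)) = 0 := by
        apply Fin.ext; simp
      rw [h0]
    have hclast : c (t + 1) = 1 := by
      simp only [hc, dif_pos (show t + 1 < t + 2 by omega)]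
      have hl : (⟨t + 1, show t + 1 < t + 2 by omega⟩ : Fin (t + 2)) = Fin.last (t + 1) := rfl
      rw [hl, htriv.2 g', LinearMap.trace_id, htriv.1, Nat.cast_one]
    rw [hc0, hclast] at htel
    rw [htel]
    -- convert the range-sum to a Fin-sum
    have hsum_eq : (∑ j ∈ Finset.range (t + 1), (-1 : ℂ) ^ j * P j) =
        ∑ j : Fin (t + 1), (-1 : ℂ) ^ (j : ℕ) *
          (if g ∈ Dsub (idx j) then ((p : ℂ) ^ (i - idx j)) else 0) := by
      rw [← Fin.sum_univ_eq_sum_range]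
      apply Finset.sum_congr rfl
      intro j _
      congr 1
      simp only [hP, dif_pos j.isLt]
    rw [hsum_eq, if_pos hgi]
    rw [mul_add, mul_add, mul_one]
    congr 1
    · rw [Finset.mul_sum, Finset.mul_sum]
      apply Finset.sum_congr rfl
      intro j _
      by_cases hj : g ∈ Dsub (idx j)
      · rw [if_pos hj, if_pos hj]
        have e1 := hidxlt j
        have e2 := hidxn j
        have key : (p : ℂ) ^ n * (p : ℂ) ^ (i - idx j) = (p : ℂ) ^ i * (p : ℂ) ^ (n - idx j) := by
          rw [← pow_add, ← pow_add]
          congr 1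
          omega
        field_simp
        push_cast
        linear_combination key
      · rw [if_neg hj, if_neg hj]
        ring
    · have key2 : (p : ℂ) ^ n = (p : ℂ) ^ i * (p : ℂ) ^ (n - i) := by
        rw [← pow_add]
        congr 1
        omega
      field_simp
      push_cast
      linear_combination key2
  · rw [dif_neg hgi, if_neg hgi]
    have hzero : ∀ j : Fin (t + 1),
        (if g ∈ Dsub (idx j) then ((p : ℂ) ^ (n - idx j)) else 0) = 0 := by
      intro j
      rw [if_neg (fun h => hgi (hKle j h))]
    rw [Finset.sum_congr rfl fun j _ => by rw [hzero j]]
    simp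
end
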